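/- arXiv:0803.0479 — 2 statements merged into one kernel-verified Lean document; each statement's English description precedes it below -/
import Mathlib

section
/- Fix d ≥ 2 and real a, b with ab ≥ 0, and suppose the generalized Werner-Holevo map Λ_{a,b}(ρ) = a ρ + b ρᵀ + (1−a−b)(tr ρ) 1/d on M_d(ℂ) is completely positive. Then the maximal purity output of Λ_{a,b} equals (1 + (d−1)(a+b)²)/d, i.e. sup over density matrices ρ of tr((Λ_{a,b}(ρ))²) = (1 + (d−1)(a+b)²)/d; equivalently, the minimal Renyi-2 entropy output is −log((1 + (d−1)(a+b)²)/d). -/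
open scoped Kronecker ComplexOrder
open Matrix

noncomputable section

/-- Apply the completely positive map determined by the Kraus operators `v`:
`ρ ↦ ∑ α, v α * ρ * (v α)ᴴ`. -/
def krausApply {K d : Type*} [Fintype K] [Fintype d] (v : K → Matrix d d ℂ)
    (ρ : Matrix d d ℂ) : Matrix d d ℂ :=
  ∑ α, v α * ρ * (v α)ᴴ

/-- The Kraus operators determine a (trace-preserving) quantum channel:
`∑ α, (v α)* (v α) = 1`. -/
def IsKraus {K d : Type*} [Fintype K] [Fintype d] [DecidableEq d]
    (v : K → Matrix d d ℂ) : Prop :=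
  ∑ α, (v α)ᴴ * v α = 1

/-- A density matrix: positive semidefinite with trace one. -/
def IsDensity {d : Type*} [Fintype d] (ρ : Matrix d d ℂ) : Prop :=
  ρ.PosSemidef ∧ ρ.trace = 1

/-- The purity `tr ρ²` of a matrix, as a real number. -/
def purity {d : Type*} [Fintype d] (ρ : Matrix d d ℂ) : ℝ :=
  ((ρ * ρ).trace).re

/-- The Choi matrix of the map `ρ ↦ Λ(ρᵀ)`, namely `∑ i j, E_ij ⊗ Λ(E_ji)`. -/
def choiT {K d : Type*} [Fintype K] [Fintype d] [DecidableEq d]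
    (v : K → Matrix d d ℂ) : Matrix (d × d) (d × d) ℂ :=
  ∑ i, ∑ j, single i j (1 : ℂ) ⊗ₖ krausApply v (single j i (1 : ℂ))

/-- The flip operator `F` on `ℂ^d ⊗ ℂ^d`, with entries `F_{(i,j),(k,l)} = δ_{il} δ_{jk}`. -/
def flipOp (d : Type*) [DecidableEq d] : Matrix (d × d) (d × d) ℂ :=
  Matrix.of fun p q => if p.1 = q.2 ∧ p.2 = q.1 then 1 else 0


/-- The generalized Werner-Holevo map `Λ_{a,b}(ρ) = a ρ + b ρᵀ + (1−a−b)(tr ρ) 1/d`. -/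
def WHmap (d : ℕ) (a b : ℝ) (ρ : Matrix (Fin d) (Fin d) ℂ) : Matrix (Fin d) (Fin d) ℂ :=
  (a : ℂ) • ρ + (b : ℂ) • ρᵀ
    + ((((1 - a - b : ℝ) : ℂ) * ρ.trace) / (d : ℂ)) • (1 : Matrix (Fin d) (Fin d) ℂ)

/-- The Choi matrix `∑ i j, E_ij ⊗ Λ_{a,b}(E_ij)` of the generalized Werner-Holevo map. -/
def WHchoi (d : ℕ) (a b : ℝ) : Matrix (Fin d × Fin d) (Fin d × Fin d) ℂ :=
  ∑ i, ∑ j, single i j (1 : ℂ) ⊗ₖ WHmap d a b (single i j (1 : ℂ))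

/- ### Auxiliary lemmas -/

lemma WH_trace_sq {d : ℕ} (hd : 0 < d) (a b : ℝ) (ρ : Matrix (Fin d) (Fin d) ℂ)
    (ht : ρ.trace = 1) :
    (WHmap d a b ρ * WHmap d a b ρ).trace
      = (((a^2 + b^2 : ℝ)) : ℂ) * (ρ * ρ).trace + (((2*a*b : ℝ)) : ℂ) * (ρ * ρᵀ).trace
        + (((1 - (a+b)^2)/d : ℝ) : ℂ) := by
  have hd' : (d : ℂ) ≠ 0 := Nat.cast_ne_zero.mpr hd.ne'
  have h1 : ρᵀ * ρᵀ = (ρ * ρ)ᵀ := by rw [transpose_mul]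
  have h2 : (ρᵀ * ρ).trace = (ρ * ρᵀ).trace := trace_mul_comm _ _
  simp only [WHmap, ht, mul_one, add_mul, mul_add, Matrix.smul_mul, Matrix.mul_smul,
    smul_smul, Matrix.mul_one, Matrix.one_mul, trace_add, trace_smul, h1, h2,
    trace_transpose, trace_one, Fintype.card_fin, ht, smul_eq_mul]
  push_cast
  field_simp
  ring

lemma WH_trace {d : ℕ} (hd : 0 < d) (a b : ℝ) (ρ : Matrix (Fin d) (Fin d) ℂ)
    (ht : ρ.trace = 1) : (WHmap d a b ρ).trace = 1 := by
  have hd' : (d : ℂ) ≠ 0 := Nat.cast_ne_zero.mpr hd.ne'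
  simp only [WHmap, trace_add, trace_smul, trace_transpose, ht, trace_one,
    Fintype.card_fin, smul_eq_mul, mul_one]
  push_cast
  field_simp
  ring

lemma ct_transpose {d : ℕ} (ρ : Matrix (Fin d) (Fin d) ℂ) : (ρᵀ)ᴴ = (ρᴴ)ᵀ := by
  ext i j; simp

lemma WH_herm {d : ℕ} (a b : ℝ) (ρ : Matrix (Fin d) (Fin d) ℂ)
    (hρ : ρᴴ = ρ) (ht : ρ.trace = 1) : (WHmap d a b ρ)ᴴ = WHmap d a b ρ := by
  simp [WHmap, ht, conjTranspose_add, conjTranspose_smul, ct_transpose, hρ,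
    Complex.star_def, map_div₀, Complex.conj_ofReal]

lemma trace_sq_le_one {d : ℕ} (ρ : Matrix (Fin d) (Fin d) ℂ)
    (hρ : ρ.PosSemidef) (ht : ρ.trace = 1) : ((ρ * ρ).trace).re ≤ 1 := by
  have hH := hρ.isHermitian
  set U : Matrix (Fin d) (Fin d) ℂ := (hH.eigenvectorUnitary : Matrix (Fin d) (Fin d) ℂ) with hU
  set D : Matrix (Fin d) (Fin d) ℂ := diagonal (RCLike.ofReal ∘ hH.eigenvalues) with hD
  have hUU : star U * U = 1 := (Matrix.mem_unitaryGroup_iff').mp hH.eigenvectorUnitary.2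
  have hspec : ρ = U * D * star U := hH.spectral_theorem
  have hsq : ρ * ρ = U * (D * D) * star U := by
    rw [hspec, show U * D * star U * (U * D * star U) = U * (D * ((star U * U) * D)) * star U by
      noncomm_ring, hUU]; noncomm_ring
  have htr : (ρ * ρ).trace = ((∑ i, (hH.eigenvalues i)^2 : ℝ) : ℂ) := by
    rw [hsq, trace_mul_comm, ← mul_assoc, hUU, one_mul, hD, diagonal_mul_diagonal, trace_diagonal]
    push_cast; simp [sq]
  have htρ : ∑ i, hH.eigenvalues i = 1 := by
    have h2 : ρ.trace = ((∑ i, hH.eigenvalues i : ℝ) : ℂ) := by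
      nth_rewrite 1 [hspec]
      rw [trace_mul_comm, ← mul_assoc, hUU, one_mul, hD, trace_diagonal]
      push_cast; simp
    rw [ht] at h2
    exact_mod_cast h2.symm
  rw [htr]
  simp only [Complex.ofReal_re]
  calc ∑ i, (hH.eigenvalues i)^2 ≤ (∑ i, hH.eigenvalues i)^2 :=
        Finset.sum_sq_le_sq_sum_of_nonneg (fun i _ => hρ.eigenvalues_nonneg i)
    _ = 1 := by rw [htρ]; norm_num

lemma trace_mul_self_re {d : ℕ} (σ : Matrix (Fin d) (Fin d) ℂ) (hσ : σᴴ = σ) :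
    ((σ * σ).trace).re = ∑ i, ∑ j, Complex.normSq (σ i j) := by
  have hs : ∀ i j, σ j i = star (σ i j) := by
    intro i j
    have := congrFun (congrFun hσ i) j
    simp only [conjTranspose_apply] at this
    rw [← this, star_star]
  have : (σ * σ).trace = ∑ i, ∑ j, ((Complex.normSq (σ i j) : ℝ) : ℂ) := by
    rw [Matrix.trace]
    simp only [Matrix.diag, Matrix.mul_apply]
    refine Finset.sum_congr rfl fun i _ => Finset.sum_congr rfl fun j _ => ?_
    rw [hs i j, Complex.star_def, Complex.mul_conj]
  rw [this]
  simp

lemma trace_mul_transpose_re_le {d : ℕ} (σ : Matrix (Fin d) (Fin d) ℂ) (hσ : σᴴ = σ) :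
    ((σ * σᵀ).trace).re ≤ ((σ * σ).trace).re := by
  rw [trace_mul_self_re σ hσ]
  have : ((σ * σᵀ).trace).re = ∑ i, ∑ j, ((σ i j)^2).re := by
    rw [Matrix.trace]
    simp only [Matrix.diag, Matrix.mul_apply, transpose_apply]
    rw [Complex.re_sum]
    refine Finset.sum_congr rfl fun i _ => ?_
    rw [Complex.re_sum]
    exact Finset.sum_congr rfl fun j _ => by rw [sq]
  rw [this]
  refine Finset.sum_le_sum fun i _ => Finset.sum_le_sum fun j _ => ?_
  rw [sq, Complex.mul_re, Complex.normSq_apply]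
  nlinarith [sq_nonneg (σ i j).im]

lemma purity_lb {d : ℕ} (hd : 0 < d) (σ : Matrix (Fin d) (Fin d) ℂ)
    (hσ : σᴴ = σ) (ht : σ.trace = 1) : 1 / (d : ℝ) ≤ ((σ * σ).trace).re := by
  rw [trace_mul_self_re σ hσ]
  have h1 : ∑ i, ((σ i i).re)^2 ≤ ∑ i, ∑ j, Complex.normSq (σ i j) := by
    refine Finset.sum_le_sum fun i _ => ?_
    calc ((σ i i).re)^2 ≤ Complex.normSq (σ i i) := by
          rw [Complex.normSq_apply]; nlinarith [sq_nonneg (σ i i).im]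
      _ ≤ ∑ j, Complex.normSq (σ i j) :=
          Finset.single_le_sum (fun j _ => Complex.normSq_nonneg _) (Finset.mem_univ i)
  have h2 : (1:ℝ) = ∑ i, (σ i i).re := by
    have h : (σ.trace).re = 1 := by rw [ht]; simp
    rw [← h, Matrix.trace, Complex.re_sum]; rfl
  have h3 : (∑ i, (σ i i).re)^2 ≤ (d : ℝ) * ∑ i, ((σ i i).re)^2 := by
    have := sq_sum_le_card_mul_sum_sq (s := (Finset.univ : Finset (Fin d)))
      (f := fun i => (σ i i).re)
    simpa using this
  rw [div_le_iff₀ (by positivity)]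
  nlinarith

lemma purity_formula {d : ℕ} (hd : 0 < d) (a b : ℝ) (ρ : Matrix (Fin d) (Fin d) ℂ)
    (ht : ρ.trace = 1) :
    purity (WHmap d a b ρ) = (a^2 + b^2) * ((ρ * ρ).trace).re
      + (2*a*b) * ((ρ * ρᵀ).trace).re + (1 - (a+b)^2)/d := by
  unfold purity
  rw [WH_trace_sq hd a b ρ ht]
  simp only [Complex.add_re, Complex.mul_re, Complex.ofReal_re, Complex.ofReal_im,
    zero_mul, sub_zero]


/-- For `d ≥ 2` and `ab ≥ 0`, if the generalized Werner-Holevo map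
`Λ_{a,b}` is completely positive then its maximal purity output is
`(1 + (d−1)(a+b)²)/d`, and its minimal Renyi-2 entropy output is
`−log((1 + (d−1)(a+b)²)/d)`. -/
theorem WH_maxPurity_of_ab_nonneg {d : ℕ} (hd : 2 ≤ d) (a b : ℝ) (hab : 0 ≤ a * b)
    (hCP : (WHchoi d a b).PosSemidef) :
    sSup {x : ℝ | ∃ ρ : Matrix (Fin d) (Fin d) ℂ, IsDensity ρ ∧
        x = purity (WHmap d a b ρ)}
      = (1 + ((d : ℝ) - 1) * (a + b) ^ 2) / d
    ∧ sInf {x : ℝ | ∃ ρ : Matrix (Fin d) (Fin d) ℂ, IsDensity ρ ∧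
        x = -Real.log (purity (WHmap d a b ρ))}
      = -Real.log ((1 + ((d : ℝ) - 1) * (a + b) ^ 2) / d) := by
  have hd0 : 0 < d := by omega
  have hdR : (0:ℝ) < d := by exact_mod_cast hd0
  set M : ℝ := (1 + ((d : ℝ) - 1) * (a + b) ^ 2) / d with hM
  have hMeq : M = (a+b)^2 + (1 - (a+b)^2)/d := by
    rw [hM]; field_simp; ring
  -- the maximizing density matrix
  set i0 : Fin d := ⟨0, hd0⟩ with hi0
  set ρ₀ : Matrix (Fin d) (Fin d) ℂ := single i0 i0 (1:ℂ) with hρ₀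
  have hct : ρ₀ᴴ = ρ₀ := by
    ext i j
    simp [hρ₀, single, conjTranspose_apply, apply_ite, and_comm]
  have htp : ρ₀ᵀ = ρ₀ := by
    ext i j
    simp [hρ₀, single, transpose_apply, and_comm]
  have hmul : ρ₀ * ρ₀ = ρ₀ := by
    rw [hρ₀, single_mul_single_same, one_mul]
  have hPSD : ρ₀.PosSemidef := by
    have h := posSemidef_conjTranspose_mul_self ρ₀
    rwa [hct, hmul] at h
  have htr : ρ₀.trace = 1 := trace_single_eq_same i0 (1:ℂ)
  have hρ₀dens : IsDensity ρ₀ := ⟨hPSD, htr⟩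
  have hpur₀ : purity (WHmap d a b ρ₀) = M := by
    rw [purity_formula hd0 a b ρ₀ htr, htp, hmul, htr, hMeq]
    simp
    ring
  -- upper bound on purity
  have hub : ∀ ρ : Matrix (Fin d) (Fin d) ℂ, IsDensity ρ → purity (WHmap d a b ρ) ≤ M := by
    intro ρ hρ
    have hH : ρᴴ = ρ := hρ.1.isHermitian
    have hX1 : ((ρ * ρ).trace).re ≤ 1 := trace_sq_le_one ρ hρ.1 hρ.2
    have hY : ((ρ * ρᵀ).trace).re ≤ ((ρ * ρ).trace).re := trace_mul_transpose_re_le ρ hH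
    rw [purity_formula hd0 a b ρ hρ.2, hMeq]
    have key : 2*a*b*(((ρ * ρᵀ).trace).re) ≤ 2*a*b*(((ρ * ρ).trace).re) :=
      mul_le_mul_of_nonneg_left hY (by linarith)
    have h2 : (a+b)^2 * (((ρ * ρ).trace).re) ≤ (a+b)^2 := by
      nlinarith [sq_nonneg (a+b)]
    nlinarith [key, h2]
  -- lower bound on purity
  have hlb : ∀ ρ : Matrix (Fin d) (Fin d) ℂ, IsDensity ρ → 1/(d:ℝ) ≤ purity (WHmap d a b ρ) := by
    intro ρ hρ
    exact purity_lb hd0 _ (WH_herm a b ρ hρ.1.isHermitian hρ.2) (WH_trace hd0 a b ρ hρ.2)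
  have hdinv : (0:ℝ) < 1/(d:ℝ) := by positivity
  have hMpos : 0 < M := lt_of_lt_of_le hdinv (hpur₀ ▸ hlb ρ₀ hρ₀dens)
  constructor
  · apply le_antisymm
    · refine csSup_le ⟨M, ρ₀, hρ₀dens, hpur₀.symm⟩ ?_
      rintro x ⟨ρ, hρ, rfl⟩
      exact hub ρ hρ
    · refine le_csSup ⟨M, ?_⟩ ⟨ρ₀, hρ₀dens, hpur₀.symm⟩
      rintro x ⟨ρ, hρ, rfl⟩
      exact hub ρ hρ
  · have hlog : ∀ ρ : Matrix (Fin d) (Fin d) ℂ, IsDensity ρ →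
        -Real.log M ≤ -Real.log (purity (WHmap d a b ρ)) := by
      intro ρ hρ
      have h1 := hlb ρ hρ
      have h2 := hub ρ hρ
      have : Real.log (purity (WHmap d a b ρ)) ≤ Real.log M :=
        Real.log_le_log (by linarith) h2
      linarith
    apply le_antisymm
    · refine csInf_le ⟨-Real.log M, ?_⟩ ⟨ρ₀, hρ₀dens, by rw [hpur₀]⟩
      rintro x ⟨ρ, hρ, rfl⟩
      exact hlog ρ hρ
    · refine le_csInf ⟨-Real.log M, ρ₀, hρ₀dens, by rw [hpur₀]⟩ ?_
      rintro x ⟨ρ, hρ, rfl⟩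
      exact hlog ρ hρ
end
end

section
/- Let Λ be a quantum channel on M_d(ℂ) with Kraus operators (v_α). Then for every unit vector φ ∈ ℂ^d, tr((Λ(|φ⟩⟨φ|))²) = ⟨φ⊗φ, (∑_{α,β} v_α* v_β ⊗ v_β* v_α) F (φ⊗φ)⟩, where F is the flip operator on ℂ^d ⊗ ℂ^d; consequently the maximal purity of Λ equals the largest value of this quadratic form over unit vectors φ: sup over density matrices ρ of tr((Λ(ρ))²) = sup over unit vectors φ of ⟨φ⊗φ, (∑_{α,β} v_α* v_β ⊗ v_β* v_α) F (φ⊗φ)⟩. -/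
open scoped Kronecker ComplexOrder
open Matrix

noncomputable section

namespace QP18

variable {d : ℕ}

def qf (φ : Fin d → ℂ) (X : Matrix (Fin d) (Fin d) ℂ) : ℂ :=
  ∑ i, ∑ k, (starRingEnd ℂ) (φ i) * X i k * φ k

lemma vecMulVec_mul (u : Fin d → ℂ) (w : Fin d → ℂ) (X : Matrix (Fin d) (Fin d) ℂ) :
    vecMulVec u w * X = vecMulVec u (w ᵥ* X) := by
  ext a b
  simp [vecMulVec_apply, Matrix.mul_apply, vecMul, dotProduct, Finset.mul_sum, mul_assoc]

lemma trace_vecMulVec (u w : Fin d → ℂ) :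
    (vecMulVec u w).trace = ∑ i, u i * w i := by
  simp [Matrix.trace, Matrix.diag, vecMulVec_apply]

def pureMat (φ : Fin d → ℂ) : Matrix (Fin d) (Fin d) ℂ := vecMulVec φ (star φ)

lemma pureMat_eq (φ : Fin d → ℂ) :
    pureMat φ = Matrix.of fun i j => φ i * (starRingEnd ℂ) (φ j) := rfl

lemma qf_eq (φ : Fin d → ℂ) (X : Matrix (Fin d) (Fin d) ℂ) :
    ∑ c, (star φ ᵥ* X) c * φ c = qf φ X := by
  simp only [vecMul, dotProduct, qf, Finset.sum_mul, Pi.star_apply, RCLike.star_def]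
  exact Finset.sum_comm

lemma trace_pure_mul_mul (φ : Fin d → ℂ) (X Y : Matrix (Fin d) (Fin d) ℂ) :
    (pureMat φ * X * pureMat φ * Y).trace = qf φ X * qf φ Y := by
  have h1 : ∀ (w : Fin d → ℂ), w ᵥ* pureMat φ = (∑ c, w c * φ c) • star φ := by
    intro w
    funext j
    simp [pureMat, vecMul, dotProduct, vecMulVec_apply, Finset.sum_mul, mul_assoc]
  rw [pureMat, vecMulVec_mul, vecMulVec_mul, vecMulVec_mul, trace_vecMulVec]
  rw [show (vecMulVec φ (star φ)) = pureMat φ from rfl, h1]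
  rw [← qf_eq φ X, ← qf_eq φ Y]
  simp only [Matrix.smul_vecMul, Pi.smul_apply, smul_eq_mul]
  rw [Finset.mul_sum]
  refine Finset.sum_congr rfl fun i _ => by ring

/-- the tensor-square vector φ ⊗ φ. -/
def psi (φ : Fin d → ℂ) : Fin d × Fin d → ℂ := fun p => φ p.1 * φ p.2

lemma flip_mulVec (φ : Fin d → ℂ) : flipOp (Fin d) *ᵥ psi φ = psi φ := by
  funext p
  simp only [mulVec, dotProduct, flipOp, Matrix.of_apply, psi]
  rw [Fintype.sum_prod_type]
  simp [ite_and, Finset.sum_ite_eq, mul_comm]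

lemma kron_qf (φ : Fin d → ℂ) (X Y : Matrix (Fin d) (Fin d) ℂ) :
    star (psi φ) ⬝ᵥ ((X ⊗ₖ Y) *ᵥ psi φ) = qf φ X * qf φ Y := by
  have lhs : star (psi φ) ⬝ᵥ ((X ⊗ₖ Y) *ᵥ psi φ)
      = ∑ i, ∑ j, ∑ k, ∑ l, ((starRingEnd ℂ) (φ i) * X i k * φ k)
          * ((starRingEnd ℂ) (φ j) * Y j l * φ l) := by
    simp only [dotProduct, mulVec, kroneckerMap_apply, Pi.star_apply, psi,
      RCLike.star_def, Fintype.sum_prod_type, Finset.mul_sum]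
    refine Finset.sum_congr rfl fun i _ => Finset.sum_congr rfl fun j _ =>
      Finset.sum_congr rfl fun k _ => Finset.sum_congr rfl fun l _ => by
        rw [_root_.map_mul]; ring
  have rhs : qf φ X * qf φ Y = ∑ i, ∑ j, ∑ k, ∑ l,
      ((starRingEnd ℂ) (φ i) * X i k * φ k) * ((starRingEnd ℂ) (φ j) * Y j l * φ l) := by
    rw [qf, qf, Finset.sum_mul_sum]
    exact Finset.sum_congr rfl fun i _ => Finset.sum_congr rfl fun j _ =>
      Finset.sum_mul_sum _ _ _ _
  rw [lhs, rhs]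

lemma sum_mulVec' {ι : Type*} (s : Finset ι) (M : ι → Matrix (Fin d × Fin d) (Fin d × Fin d) ℂ)
    (x : Fin d × Fin d → ℂ) : (∑ i ∈ s, M i) *ᵥ x = ∑ i ∈ s, M i *ᵥ x := by
  funext p
  simp only [mulVec, dotProduct, Matrix.sum_apply, Finset.sum_apply, Finset.sum_mul]
  exact Finset.sum_comm

lemma dot_sum' {ι : Type*} (s : Finset ι) (x : Fin d × Fin d → ℂ)
    (w : ι → (Fin d × Fin d → ℂ)) : x ⬝ᵥ (∑ i ∈ s, w i) = ∑ i ∈ s, x ⬝ᵥ w i := by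
  simp only [dotProduct, Finset.sum_apply, Finset.mul_sum]
  exact Finset.sum_comm

lemma krausApply_isHermitian {K : ℕ} (v : Fin K → Matrix (Fin d) (Fin d) ℂ)
    {ρ : Matrix (Fin d) (Fin d) ℂ} (hρ : ρ.IsHermitian) : (krausApply v ρ).IsHermitian := by
  unfold krausApply Matrix.IsHermitian
  rw [conjTranspose_sum]
  refine Finset.sum_congr rfl fun α _ => ?_
  simp [conjTranspose_mul, hρ.eq, Matrix.mul_assoc]

lemma pureMat_isHermitian (φ : Fin d → ℂ) : (pureMat φ).IsHermitian := by
  ext i j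
  simp [pureMat, conjTranspose_apply, vecMulVec_apply, mul_comm]

lemma trace_sq_real {M : Matrix (Fin d) (Fin d) ℂ} (hM : M.IsHermitian) :
    (((M * M).trace.re : ℝ) : ℂ) = (M * M).trace := by
  rw [← Complex.conj_eq_iff_re, ← RCLike.star_def, ← Matrix.trace_conjTranspose,
    conjTranspose_mul, hM.eq]

lemma trace_kraus_sq {K : ℕ} (v : Fin K → Matrix (Fin d) (Fin d) ℂ) (φ : Fin d → ℂ) :
    (krausApply v (pureMat φ) * krausApply v (pureMat φ)).trace
      = ∑ α, ∑ β, qf φ ((v α)ᴴ * v β) * qf φ ((v β)ᴴ * v α) := by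
  unfold krausApply
  rw [Finset.sum_mul_sum, Matrix.trace_sum]
  refine Finset.sum_congr rfl fun α _ => ?_
  rw [Matrix.trace_sum]
  refine Finset.sum_congr rfl fun β _ => ?_
  have h : (v α * pureMat φ * (v α)ᴴ) * (v β * pureMat φ * (v β)ᴴ)
      = v α * (pureMat φ * ((v α)ᴴ * v β) * pureMat φ * ((v β)ᴴ)) := by
    simp only [Matrix.mul_assoc]
  have h2 : (pureMat φ * ((v α)ᴴ * v β) * pureMat φ * ((v β)ᴴ)) * v α
      = pureMat φ * ((v α)ᴴ * v β) * pureMat φ * ((v β)ᴴ * v α) := by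
    simp only [Matrix.mul_assoc]
  rw [h, Matrix.trace_mul_comm, h2, trace_pure_mul_mul]

lemma part1 {K : ℕ} (v : Fin K → Matrix (Fin d) (Fin d) ℂ) (φ : Fin d → ℂ) :
    ((purity (krausApply v (pureMat φ)) : ℝ) : ℂ)
      = star (psi φ) ⬝ᵥ (((∑ α, ∑ β, ((v α)ᴴ * v β) ⊗ₖ ((v β)ᴴ * v α)) * flipOp (Fin d))
          *ᵥ psi φ) := by
  rw [← Matrix.mulVec_mulVec, flip_mulVec, sum_mulVec', dot_sum']
  have : ∀ α, (∑ β, ((v α)ᴴ * v β) ⊗ₖ ((v β)ᴴ * v α)) *ᵥ psi φ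
      = ∑ β, (((v α)ᴴ * v β) ⊗ₖ ((v β)ᴴ * v α)) *ᵥ psi φ := fun α => sum_mulVec' _ _ _
  simp only [this, dot_sum', kron_qf]
  rw [purity, trace_sq_real (krausApply_isHermitian v (pureMat_isHermitian φ)),
    trace_kraus_sq]

/-! ### Part 2 machinery -/

def emb (M : Matrix (Fin d) (Fin d) ℂ) : EuclideanSpace ℂ (Fin d × Fin d) :=
  WithLp.toLp 2 fun p : Fin d × Fin d => M p.1 p.2

lemma emb_sum {ι : Type*} (s : Finset ι) (M : ι → Matrix (Fin d) (Fin d) ℂ) :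
    emb (∑ i ∈ s, M i) = ∑ i ∈ s, emb (M i) := by
  ext p
  rw [show (∑ i ∈ s, emb (M i)) p = ∑ i ∈ s, emb (M i) p from by simp [WithLp.ofLp_sum]]
  simp [emb, Matrix.sum_apply]

lemma emb_smul (c : ℂ) (M : Matrix (Fin d) (Fin d) ℂ) : emb (c • M) = c • emb M := WithLp.toLp_smul 2 c _

lemma purity_eq_norm_sq {M : Matrix (Fin d) (Fin d) ℂ} (hM : M.IsHermitian) :
    purity M = ‖emb M‖ ^ 2 := by
  have h1 : ‖emb M‖ ^ 2 = ∑ p : Fin d × Fin d, Complex.normSq (M p.1 p.2) := by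
    rw [EuclideanSpace.norm_eq, Real.sq_sqrt]
    · simp [emb, Complex.sq_norm]
    · positivity
  have h2 : (M * M).trace = ((∑ p : Fin d × Fin d, Complex.normSq (M p.1 p.2) : ℝ) : ℂ) := by
    rw [Matrix.trace]
    push_cast
    rw [Fintype.sum_prod_type]
    refine Finset.sum_congr rfl fun i _ => ?_
    rw [Matrix.diag_apply, Matrix.mul_apply]
    refine Finset.sum_congr rfl fun j _ => ?_
    have hji : M j i = (starRingEnd ℂ) (M i j) := by
      conv_lhs => rw [← hM.eq]
      rfl
    rw [hji, Complex.mul_conj]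
  rw [purity, h2, Complex.ofReal_re, h1]

lemma vecMul_pureMat (φ w : Fin d → ℂ) :
    w ᵥ* pureMat φ = (∑ c, w c * φ c) • star φ := by
  funext j
  simp [pureMat, vecMul, dotProduct, vecMulVec_apply, Finset.sum_mul, mul_assoc]

lemma pureMat_mul_self {u : Fin d → ℂ} (hu : ∑ i, Complex.normSq (u i) = 1) :
    pureMat u * pureMat u = pureMat u := by
  have hsum : ∑ c, (star u) c * u c = 1 := by
    have : ∑ c, (star u) c * u c = ((∑ i, Complex.normSq (u i) : ℝ) : ℂ) := by
      push_cast
      refine Finset.sum_congr rfl fun c _ => ?_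
      rw [Pi.star_apply, RCLike.star_def, mul_comm, Complex.mul_conj]
    rw [this, hu, Complex.ofReal_one]
  conv_lhs => rw [pureMat, vecMulVec_mul]
  rw [show vecMulVec u (star u) = pureMat u from rfl, vecMul_pureMat, hsum, one_smul, pureMat]

lemma trace_pureMat {u : Fin d → ℂ} (hu : ∑ i, Complex.normSq (u i) = 1) :
    (pureMat u).trace = 1 := by
  rw [pureMat, trace_vecMulVec]
  have : ∑ i, u i * (star u) i = ((∑ i, Complex.normSq (u i) : ℝ) : ℂ) := by
    push_cast
    refine Finset.sum_congr rfl fun c _ => ?_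
    rw [Pi.star_apply, RCLike.star_def, Complex.mul_conj]
  rw [this, hu, Complex.ofReal_one]

lemma purity_pureMat {u : Fin d → ℂ} (hu : ∑ i, Complex.normSq (u i) = 1) :
    purity (pureMat u) = 1 := by
  rw [purity, pureMat_mul_self hu, trace_pureMat hu, Complex.one_re]

lemma pureMat_posSemidef (u : Fin d → ℂ) : (pureMat u).PosSemidef := by
  refine posSemidef_iff_dotProduct_mulVec.mpr ⟨pureMat_isHermitian u, fun x => ?_⟩
  have hmv : pureMat u *ᵥ x = (star u ⬝ᵥ x) • u := by
    funext i
    simp [pureMat, mulVec, dotProduct, vecMulVec_apply, Finset.mul_sum,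
      mul_assoc, mul_comm, mul_left_comm]
  have hconj : star x ⬝ᵥ u = (starRingEnd ℂ) (star u ⬝ᵥ x) := by
    rw [dotProduct, dotProduct, map_sum]
    refine Finset.sum_congr rfl fun i _ => ?_
    simp [mul_comm]
  rw [hmv, dotProduct_smul, smul_eq_mul, hconj, Complex.mul_conj]
  exact_mod_cast Complex.normSq_nonneg _

lemma pureMat_density {u : Fin d → ℂ} (hu : ∑ i, Complex.normSq (u i) = 1) :
    IsDensity (pureMat u) :=
  ⟨pureMat_posSemidef u, trace_pureMat hu⟩

lemma density_decomp {ρ : Matrix (Fin d) (Fin d) ℂ} (hρ : IsDensity ρ) :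
    ∃ (lam : Fin d → ℝ) (u : Fin d → (Fin d → ℂ)),
      (∀ j, 0 ≤ lam j) ∧ (∑ j, lam j = 1) ∧ (∀ j, ∑ i, Complex.normSq (u j i) = 1) ∧
      ρ = ∑ j, (lam j : ℂ) • pureMat (u j) := by
  obtain ⟨hpsd, htr⟩ := hρ
  have hH : ρ.IsHermitian := hpsd.1
  set U : Matrix (Fin d) (Fin d) ℂ := (hH.eigenvectorUnitary : Matrix (Fin d) (Fin d) ℂ) with hUdef
  have hU : star U * U = 1 := Matrix.UnitaryGroup.star_mul_self _
  have hcol : ∀ j, ∑ i, Complex.normSq (U i j) = 1 := by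
    intro j
    have := congrFun (congrFun hU j) j
    rw [Matrix.mul_apply, Matrix.one_apply_eq] at this
    have h2 : ∑ i, ((Complex.normSq (U i j) : ℝ) : ℂ) = 1 := by
      rw [← this]
      refine Finset.sum_congr rfl fun i _ => ?_
      rw [Matrix.star_apply, RCLike.star_def,
        mul_comm ((starRingEnd ℂ) (U i j)) (U i j), Complex.mul_conj]
    exact_mod_cast h2
  have hdec : ρ = ∑ j, ((hH.eigenvalues j : ℝ) : ℂ) • pureMat (fun i => U i j) := by
    have hs := hH.spectral_theorem
    have hcoe : ∀ r : ℝ, (RCLike.ofReal r : ℂ) = (r : ℂ) := fun r => rfl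
    ext i k
    conv_lhs => rw [hs]
    rw [Matrix.sum_apply]
    simp only [Unitary.conjStarAlgAut_apply, Matrix.mul_apply, Matrix.diagonal_apply, Function.comp_apply, mul_ite, mul_zero,
      ite_mul, zero_mul, Finset.sum_ite_eq', Finset.mem_univ, if_true, Matrix.smul_apply,
      pureMat, vecMulVec_apply, Pi.star_apply, Matrix.star_apply, RCLike.star_def, smul_eq_mul,
      Matrix.of_apply, hcoe]
    refine Finset.sum_congr rfl fun b _ => by ring
  have hsum : ∑ j, hH.eigenvalues j = 1 := by
    have h1 : ρ.trace = ∑ j, ((hH.eigenvalues j : ℝ) : ℂ) := by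
      conv_lhs => rw [hdec]
      rw [Matrix.trace_sum]
      refine Finset.sum_congr rfl fun j _ => ?_
      rw [Matrix.trace_smul, trace_pureMat (hcol j), smul_eq_mul, mul_one]
    rw [htr] at h1
    exact_mod_cast h1.symm
  exact ⟨hH.eigenvalues, fun j i => U i j, hpsd.eigenvalues_nonneg, hsum, hcol, hdec⟩

lemma krausApply_decomp {K : ℕ} (v : Fin K → Matrix (Fin d) (Fin d) ℂ)
    (c : Fin d → ℂ) (P : Fin d → Matrix (Fin d) (Fin d) ℂ) :
    krausApply v (∑ j, c j • P j) = ∑ j, c j • krausApply v (P j) := by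
  unfold krausApply
  simp only [Matrix.mul_sum, Matrix.sum_mul, Matrix.mul_smul, Matrix.smul_mul, Finset.smul_sum]
  exact Finset.sum_comm

lemma purity_le_pure {K : ℕ} (v : Fin K → Matrix (Fin d) (Fin d) ℂ)
    {ρ : Matrix (Fin d) (Fin d) ℂ} (hρ : IsDensity ρ) :
    ∃ u : Fin d → ℂ, (∑ i, Complex.normSq (u i) = 1) ∧
      purity (krausApply v ρ) ≤ purity (krausApply v (pureMat u)) := by
  have hne : Nonempty (Fin d) := by
    by_contra h
    have hE : IsEmpty (Fin d) := not_nonempty_iff.mp h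
    have := hρ.2
    rw [Matrix.trace, Finset.univ_eq_empty, Finset.sum_empty] at this
    exact one_ne_zero this.symm
  obtain ⟨lam, u, hlam0, hlam1, hunit, hdec⟩ := density_decomp hρ
  obtain ⟨j0, _, hj0⟩ := Finset.exists_max_image Finset.univ
    (fun j => ‖emb (krausApply v (pureMat (u j)))‖) Finset.univ_nonempty
  refine ⟨u j0, hunit j0, ?_⟩
  rw [purity_eq_norm_sq (krausApply_isHermitian v hρ.1.1),
    purity_eq_norm_sq (krausApply_isHermitian v (pureMat_isHermitian _))]
  have key : ‖emb (krausApply v ρ)‖ ≤ ‖emb (krausApply v (pureMat (u j0)))‖ := by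
    conv_lhs => rw [hdec, krausApply_decomp, emb_sum]
    simp only [emb_smul]
    calc ‖∑ j, ((lam j : ℝ) : ℂ) • emb (krausApply v (pureMat (u j)))‖
        ≤ ∑ j, ‖((lam j : ℝ) : ℂ) • emb (krausApply v (pureMat (u j)))‖ :=
          norm_sum_le _ _
      _ = ∑ j, lam j * ‖emb (krausApply v (pureMat (u j)))‖ := by
          refine Finset.sum_congr rfl fun j _ => ?_
          rw [norm_smul, Complex.norm_real, Real.norm_eq_abs, abs_of_nonneg (hlam0 j)]
      _ ≤ ∑ j, lam j * ‖emb (krausApply v (pureMat (u j0)))‖ :=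
          Finset.sum_le_sum fun j _ =>
            mul_le_mul_of_nonneg_left (hj0 j (Finset.mem_univ j)) (hlam0 j)
      _ = ‖emb (krausApply v (pureMat (u j0)))‖ := by
          rw [← Finset.sum_mul, hlam1, one_mul]
  exact pow_le_pow_left₀ (norm_nonneg _) key 2

lemma krausApply_density {K : ℕ} {v : Fin K → Matrix (Fin d) (Fin d) ℂ} (hv : IsKraus v)
    {ρ : Matrix (Fin d) (Fin d) ℂ} (hρ : IsDensity ρ) : IsDensity (krausApply v ρ) := by
  constructor
  · unfold krausApply
    refine Finset.sum_induction _ _ (fun a b ha hb => ha.add hb) Matrix.PosSemidef.zero ?_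
    exact fun α _ => hρ.1.mul_mul_conjTranspose_same (v α)
  · unfold krausApply
    rw [Matrix.trace_sum]
    calc ∑ α, (v α * ρ * (v α)ᴴ).trace
        = ∑ α, ((v α)ᴴ * v α * ρ).trace := by
          refine Finset.sum_congr rfl fun α _ => ?_
          rw [Matrix.trace_mul_cycle]
      _ = ((∑ α, (v α)ᴴ * v α) * ρ).trace := by
          rw [Matrix.sum_mul, Matrix.trace_sum]
      _ = 1 := by rw [hv, one_mul, hρ.2]

lemma purity_le_one {σ : Matrix (Fin d) (Fin d) ℂ} (hσ : IsDensity σ) : purity σ ≤ 1 := by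
  have hid : ∀ ρ : Matrix (Fin d) (Fin d) ℂ,
      krausApply (fun _ : Fin 1 => (1 : Matrix (Fin d) (Fin d) ℂ)) ρ = ρ := by
    intro ρ
    simp [krausApply]
  obtain ⟨u, hu, hle⟩ := purity_le_pure (fun _ : Fin 1 => (1 : Matrix (Fin d) (Fin d) ℂ)) hσ
  rw [hid, hid, purity_pureMat hu] at hle
  exact hle

lemma sup_eq {A B : Set ℝ} (hBA : B ⊆ A) (hA1 : ∀ x ∈ A, x ≤ 1)
    (hAB : ∀ x ∈ A, ∃ y ∈ B, x ≤ y) : sSup A = sSup B := by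
  rcases A.eq_empty_or_nonempty with hA | hAne
  · have hB : B = ∅ := Set.eq_empty_of_subset_empty (hA ▸ hBA)
    rw [hA, hB]
  · have hAbdd : BddAbove A := ⟨1, fun x hx => hA1 x hx⟩
    have hBbdd : BddAbove B := hAbdd.mono hBA
    have hBne : B.Nonempty := by
      obtain ⟨x, hx⟩ := hAne
      obtain ⟨y, hy, _⟩ := hAB x hx
      exact ⟨y, hy⟩
    refine le_antisymm (csSup_le hAne fun x hx => ?_) (csSup_le_csSup hAbdd hBne hBA)
    obtain ⟨y, hyB, hxy⟩ := hAB x hx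
    exact hxy.trans (le_csSup hBbdd hyB)

lemma norm_one_of_normSq (u : Fin d → ℂ) (hu : ∑ i, Complex.normSq (u i) = 1) :
    ‖(WithLp.toLp 2 u : EuclideanSpace ℂ (Fin d))‖ = 1 := by
  rw [EuclideanSpace.norm_eq]
  simp only [WithLp.ofLp_toLp, Complex.sq_norm]
  rw [show (∑ i, Complex.normSq (u i)) = 1 from hu, Real.sqrt_one]

lemma normSq_of_norm_one (φ : EuclideanSpace ℂ (Fin d)) (hφ : ‖φ‖ = 1) :
    ∑ i, Complex.normSq (φ i) = 1 := by
  have h := EuclideanSpace.norm_eq φ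
  rw [hφ] at h
  have h2 : (∑ i, ‖φ i‖ ^ 2) = 1 := Real.sqrt_eq_one.mp h.symm
  simpa [Complex.sq_norm] using h2

end QP18

/-- For a quantum channel `Λ` with Kraus operators `v` on `M_d(ℂ)` and
any unit vector `φ ∈ ℂ^d`,
`tr((Λ(|φ⟩⟨φ|))²) = ⟨φ⊗φ, (∑ α β, v_α* v_β ⊗ v_β* v_α) F (φ⊗φ)⟩`,
and consequently the maximal purity of `Λ` is the supremum of this quadratic form over
unit vectors. -/
theorem purity_pure_state_quadratic_form {K d : ℕ}
    (v : Fin K → Matrix (Fin d) (Fin d) ℂ) (hv : IsKraus v) :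
    (∀ φ : EuclideanSpace ℂ (Fin d), ‖φ‖ = 1 →
      (purity (krausApply v (Matrix.of fun i j => φ i * (starRingEnd ℂ) (φ j))) : ℂ)
        = star (fun p : Fin d × Fin d => φ p.1 * φ p.2)
            ⬝ᵥ (((∑ α, ∑ β, ((v α)ᴴ * v β) ⊗ₖ ((v β)ᴴ * v α)) * flipOp (Fin d))
              *ᵥ fun p : Fin d × Fin d => φ p.1 * φ p.2))
    ∧ sSup {x : ℝ | ∃ ρ : Matrix (Fin d) (Fin d) ℂ, IsDensity ρ ∧
          x = purity (krausApply v ρ)}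
      = sSup {x : ℝ | ∃ φ : EuclideanSpace ℂ (Fin d), ‖φ‖ = 1 ∧
          (x : ℂ) = star (fun p : Fin d × Fin d => φ p.1 * φ p.2)
            ⬝ᵥ (((∑ α, ∑ β, ((v α)ᴴ * v β) ⊗ₖ ((v β)ᴴ * v α)) * flipOp (Fin d))
              *ᵥ fun p : Fin d × Fin d => φ p.1 * φ p.2)} := by
  classical
  constructor
  · intro φ _
    exact QP18.part1 v ⇑φ
  · refine QP18.sup_eq ?_ ?_ ?_
    · rintro x ⟨φ, hφ, hx⟩
      have hu : ∑ i, Complex.normSq (φ i) = 1 := QP18.normSq_of_norm_one φ hφ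
      have hx' : x = purity (krausApply v (QP18.pureMat ⇑φ)) := by
        have h2 : (x : ℂ) = ((purity (krausApply v (QP18.pureMat ⇑φ)) : ℝ) : ℂ) :=
          hx.trans (QP18.part1 v ⇑φ).symm
        exact_mod_cast h2
      exact ⟨QP18.pureMat ⇑φ, QP18.pureMat_density hu, hx'⟩
    · rintro x ⟨ρ, hρ, rfl⟩
      exact QP18.purity_le_one (QP18.krausApply_density hv hρ)
    · rintro x ⟨ρ, hρ, rfl⟩
      obtain ⟨u, hu, hle⟩ := QP18.purity_le_pure v hρ
      exact ⟨purity (krausApply v (QP18.pureMat u)),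
        ⟨(WithLp.toLp 2 u : EuclideanSpace ℂ (Fin d)), QP18.norm_one_of_normSq u hu,
          QP18.part1 v u⟩, hle⟩
end
end
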